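/- Let L > π, c > 1 + π/(L-π), and let φ_c be the periodic travelling wave of the rBO equation with Fourier coefficients φ̂_c(n) = (2πc/L)e^{-η(c)|n|}, η(c) = tanh⁻¹(cπ/((c-1)L)). Then the function χ = -dφ_c/dc satisfies (χ, φ_c + Hφ_c')_{L²} = -L (d/dc) Σ_{n∈ℤ}(1+|n|)|φ̂_c(n)|² < 0. -/

import Mathlib

/-!
With `q = e^{-2η}` the series is `Σ_{n∈ℤ} (1+|n|) q^{|n|} = 2/(1-q)² - 1`. Since
`η = tanh⁻¹ x` with `x = cπ/((c-1)L)`, one has `q = (1-x)/(1+x)` and `2πc/L = 2(c-1)x`, so for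
admissible speeds `F(c) = (2(c-1) + 2πc/L)²/2 - (2πc/L)²` is a quadratic polynomial in `c`.
Its derivative, times `L²/4`, is `(c(L-π) - L)(L+π) + 2πcL`, which is positive because the
hypothesis on `c` says exactly `c(L-π) > L`.
-/

/-- The inverse hyperbolic tangent, `tanh⁻¹ x = (1/2) log((1+x)/(1-x))`. -/
noncomputable def arctanh (x : ℝ) : ℝ := (1 / 2) * Real.log ((1 + x) / (1 - x))

/-- `η(c) = tanh⁻¹(cπ/((c−1)L))`. -/
noncomputable def ηc (L c : ℝ) : ℝ := arctanh (c * Real.pi / ((c - 1) * L))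

/-- `F(c) = Σ_{n∈ℤ} (1+|n|) |φ̂_c(n)|²` with `φ̂_c(n) = (2πc/L) e^{−η(c)|n|}`. -/
noncomputable def Fpair (L : ℝ) (c : ℝ) : ℝ :=
  ∑' n : ℤ, (1 + |(n : ℝ)|) *
    ((2 * Real.pi * c / L) * Real.exp (-(ηc L c) * |(n : ℝ)|)) ^ 2

open Real Filter

lemma hasSum_one_add_mul_geometric {𝕜 : Type*} [NormedField 𝕜] [CompleteSpace 𝕜]
    {q : 𝕜} (hq : ‖q‖ < 1) : HasSum (fun k : ℕ => (1 + (k : 𝕜)) * q ^ k) (1 / (1 - q) ^ 2) := by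
  have := hasSum_choose_mul_geometric_of_norm_lt_one 1 hq
  simp only [Nat.choose_one_right, Nat.cast_add, Nat.cast_one] at this
  convert this using 2 with k
  ring

lemma hasSum_int_one_add_natAbs_mul_pow_natAbs {𝕜 : Type*} [NormedField 𝕜] [CompleteSpace 𝕜]
    {q : 𝕜} (hq : ‖q‖ < 1) :
    HasSum (fun n : ℤ => (1 + (n.natAbs : 𝕜)) * q ^ n.natAbs) (2 / (1 - q) ^ 2 - 1) := by
  have hnat := hasSum_one_add_mul_geometric hq
  have h := HasSum.of_nat_of_neg (f := fun n : ℤ => (1 + (n.natAbs : 𝕜)) * q ^ n.natAbs)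
    (by simpa only [Int.natAbs_natCast] using hnat)
    (by simpa only [Int.natAbs_neg, Int.natAbs_natCast] using hnat)
  rwa [Int.natAbs_zero, Nat.cast_zero, add_zero, pow_zero, mul_one, ← add_div,
    one_add_one_eq_two] at h

lemma exp_neg_two_mul_arctanh {x : ℝ} (h₀ : -1 < x) (h₁ : x < 1) :
    exp (-(2 * arctanh x)) = (1 - x) / (1 + x) := by
  have hpos : 0 < (1 + x) / (1 - x) := div_pos (by linarith) (by linarith)
  rw [arctanh, ← mul_assoc, show (2 : ℝ) * (1 / 2) = 1 by norm_num, one_mul, exp_neg,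
    exp_log hpos, inv_div]

lemma lt_mul_sub_of_one_add_div_sub_lt {a L c : ℝ} (ha : a < L) (hc : 1 + a / (L - a) < c) :
    L < c * (L - a) := by
  have := lt_sub_iff_add_lt'.2 hc
  rw [div_lt_iff₀ (sub_pos.2 ha)] at this
  linarith

section Wave

variable {L c : ℝ}

lemma wave_param_mem_Ioo (hL : π < L) (hc : 1 + π / (L - π) < c) :
    c * π / ((c - 1) * L) ∈ Set.Ioo 0 1 := by
  have hc' := lt_mul_sub_of_one_add_div_sub_lt hL hc
  have hc1 : 1 < c := by nlinarith [pi_pos]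
  have hden : 0 < (c - 1) * L := mul_pos (by linarith) (by linarith [pi_pos])
  exact ⟨by have := pi_pos; positivity, (div_lt_one hden).2 (by nlinarith)⟩

lemma Fpair_eq (hL : π < L) (hc : 1 + π / (L - π) < c) :
    Fpair L c = (2 * (c - 1) + 2 * π * c / L) ^ 2 / 2 - (2 * π * c / L) ^ 2 := by
  obtain ⟨hx₀, hx₁⟩ := wave_param_mem_Ioo hL hc
  set x := c * π / ((c - 1) * L) with hx
  set q := exp (-(2 * ηc L c)) with hq
  have hq₀ : 0 < q := exp_pos _
  have hq' : q = (1 - x) / (1 + x) := exp_neg_two_mul_arctanh (by linarith) hx₁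
  have hterm (n : ℤ) : (1 + |(n : ℝ)|) * ((2 * π * c / L) * exp (-ηc L c * |(n : ℝ)|)) ^ 2
      = (2 * π * c / L) ^ 2 * ((1 + (n.natAbs : ℝ)) * q ^ n.natAbs) := by
    rw [hq, ← exp_nat_mul, mul_pow, sq (exp _), ← exp_add, Nat.cast_natAbs, Int.cast_abs]
    ring_nf
  have hsum := hasSum_int_one_add_natAbs_mul_pow_natAbs (q := q) (by
    rw [norm_of_nonneg hq₀.le, hq']
    exact (div_lt_one (by linarith)).2 (by linarith))
  have hc₁ : c - 1 ≠ 0 := by have := lt_mul_sub_of_one_add_div_sub_lt hL hc; nlinarith [pi_pos]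
  have hA : 2 * π * c / L = 2 * (c - 1) * x := by
    rw [hx]; field_simp
  have hq₁ : 1 - q = 2 * x / (1 + x) := by rw [hq']; field_simp; ring
  rw [Fpair, tsum_congr hterm, tsum_mul_left, hsum.tsum_eq, hq₁, hA]
  have hx_ne : x ≠ 0 := hx₀.ne'
  field_simp

noncomputable def FpairDeriv (L c : ℝ) : ℝ :=
  (2 * (c - 1) + 2 * π * c / L) * (2 + 2 * π / L) - 2 * (2 * π * c / L) * (2 * π / L)

lemma hasDerivAt_Fpair (hL : π < L) (hc : 1 + π / (L - π) < c) :
    HasDerivAt (Fpair L) (FpairDeriv L c) c := by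
  have hA : HasDerivAt (fun c => 2 * π * c / L) (2 * π / L) c := by
    simpa using ((hasDerivAt_id c).const_mul (2 * π)).div_const L
  have hB : HasDerivAt (fun c => 2 * (c - 1) + 2 * π * c / L) (2 + 2 * π / L) c :=
    ((((hasDerivAt_id' c).sub_const 1).const_mul 2).add hA).congr_deriv (by ring)
  have hpoly := ((hB.pow 2).div_const 2).sub (hA.pow 2)
  refine (hpoly.congr_deriv (by rw [FpairDeriv]; ring)).congr_of_eventuallyEq ?_
  filter_upwards [isOpen_Ioi.mem_nhds hc] with c' hc' using Fpair_eq hL hc'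

lemma FpairDeriv_pos (hL : π < L) (hc : 1 + π / (L - π) < c) : 0 < FpairDeriv L c := by
  have hL₀ : 0 < L := by linarith [pi_pos]
  have hc' := lt_mul_sub_of_one_add_div_sub_lt hL hc
  have hc₀ : 0 < c := by nlinarith [pi_pos]
  have hscaled : FpairDeriv L c * L ^ 2 = 4 * ((c * (L - π) - L) * (L + π) + 2 * π * c * L) := by
    rw [FpairDeriv]
    field_simp
    ring
  refine pos_of_mul_pos_left ?_ (sq_nonneg L)
  rw [hscaled]
  have := mul_pos (sub_pos.2 hc') (by linarith [pi_pos] : 0 < L + π)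
  have := mul_pos (mul_pos pi_pos hc₀) hL₀
  linarith

end Wave

/-- **The pairing `(−dφ_c/dc, φ_c + Hφ_c') = −L dF/dc` is strictly negative.** -/
theorem pairing_negative (L c : ℝ) (hL : Real.pi < L)
    (hc : 1 + Real.pi / (L - Real.pi) < c) :
    DifferentiableAt ℝ (Fpair L) c ∧ -L * deriv (Fpair L) c < 0 := by
  have hF := hasDerivAt_Fpair hL hc
  refine ⟨hF.differentiableAt, ?_⟩
  rw [hF.deriv, neg_mul, neg_lt_zero]
  exact mul_pos (by linarith [pi_pos]) (FpairDeriv_pos hL hc)
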